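/- arXiv:1208.2337 — 7 statements merged into one kernel-verified Lean document; each statement's English description precedes it below -/
import Mathlib

section
/- For every n ≥ 1, the Yablonskii–Vorob'ev polynomial Q_n is a monic polynomial of degree n(n+1)/2 with integer coefficients. -/
/-!
In `Q (n+2) * Q n = X * Q (n+1) ^ 2 - 4 * (…)` the correction term has degree at most
`2 * deg Q (n+1)`, so the right-hand side is monic of degree `2 * deg Q (n+1) + 1`; dividing by the
monic `Q n` keeps monicity and gives the triangular-number degrees. Integrality is preserved because
a monic `p ∈ ℤ[X]` dividing some `r ∈ ℤ[X]` over `ℝ` already divides it over `ℤ`.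
-/

open Polynomial

namespace Polynomial

section YablonskiiVorobev

variable {R : Type*} [CommRing R]

noncomputable def yablonskiiVorobevRhs (p : R[X]) : R[X] :=
  X * p ^ 2 - 4 * (p * derivative (derivative p) - derivative p ^ 2)

theorem yablonskiiVorobevRhs_map {S : Type*} [CommRing S] (f : R →+* S) (p : R[X]) :
    (yablonskiiVorobevRhs p).map f = yablonskiiVorobevRhs (p.map f) := by
  simp [yablonskiiVorobevRhs, derivative_map]

theorem natDegree_yablonskiiVorobevRhs_correction_le (p : R[X]) :
    (4 * (p * derivative (derivative p) - derivative p ^ 2)).natDegree ≤ 2 * p.natDegree := by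
  have h1 := natDegree_derivative_le p
  have h2 := natDegree_derivative_le (derivative p)
  have hmul : (p * derivative (derivative p)).natDegree ≤ 2 * p.natDegree :=
    natDegree_mul_le.trans (by omega)
  have hsq : (derivative p ^ 2).natDegree ≤ 2 * p.natDegree :=
    natDegree_pow_le.trans (by omega)
  calc (4 * (p * derivative (derivative p) - derivative p ^ 2)).natDegree
      ≤ (p * derivative (derivative p) - derivative p ^ 2).natDegree :=
        natDegree_mul_le.trans (by rw [natDegree_ofNat, zero_add])
    _ ≤ 2 * p.natDegree := (natDegree_sub_le _ _).trans (max_le hmul hsq)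

variable [Nontrivial R] {p : R[X]}

theorem Monic.natDegree_X_mul_sq (hp : p.Monic) : (X * p ^ 2).natDegree = 2 * p.natDegree + 1 := by
  rw [monic_X.natDegree_mul (hp.pow 2), natDegree_X, hp.natDegree_pow]
  ring

theorem Monic.natDegree_correction_lt_natDegree_X_mul_sq (hp : p.Monic) :
    (4 * (p * derivative (derivative p) - derivative p ^ 2)).natDegree < (X * p ^ 2).natDegree := by
  rw [hp.natDegree_X_mul_sq]
  exact Nat.lt_succ_of_le (natDegree_yablonskiiVorobevRhs_correction_le p)

theorem Monic.natDegree_yablonskiiVorobevRhs (hp : p.Monic) :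
    (yablonskiiVorobevRhs p).natDegree = 2 * p.natDegree + 1 := by
  rw [yablonskiiVorobevRhs,
    natDegree_sub_eq_left_of_natDegree_lt hp.natDegree_correction_lt_natDegree_X_mul_sq,
    hp.natDegree_X_mul_sq]

theorem monic_yablonskiiVorobevRhs (hp : p.Monic) : (yablonskiiVorobevRhs p).Monic :=
  (monic_X.mul (hp.pow 2)).sub_of_left
    (degree_lt_degree hp.natDegree_correction_lt_natDegree_X_mul_sq)

theorem Monic.of_mul_eq_yablonskiiVorobevRhs {p₀ p₂ : R[X]} (hp₀ : p₀.Monic) (hp : p.Monic)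
    (h : p₂ * p₀ = yablonskiiVorobevRhs p) :
    p₂.Monic ∧ p₂.natDegree + p₀.natDegree = 2 * p.natDegree + 1 := by
  have hp₂ : p₂.Monic :=
    hp₀.of_mul_monic_left (by rw [mul_comm, h]; exact monic_yablonskiiVorobevRhs hp)
  exact ⟨hp₂, by rw [← hp₂.natDegree_mul hp₀, h, hp.natDegree_yablonskiiVorobevRhs]⟩

end YablonskiiVorobev

theorem exists_map_eq_of_map_mul_eq {R S : Type*} [CommRing R] [CommRing S] {f : R →+* S}
    (hf : Function.Injective f) {p r : R[X]} (hp : p.Monic) {q : S[X]}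
    (h : p.map f * q = r.map f) : ∃ q' : R[X], q = q'.map f := by
  obtain ⟨q', rfl⟩ := (map_dvd_map f hf hp).1 ⟨q, h.symm⟩
  refine ⟨q', (hp.map f).isRegular.left ?_⟩
  simpa [Polynomial.map_mul] using h

end Polynomial

theorem Nat.triangle_add_two_add_triangle (n : ℕ) :
    (n + 2) * (n + 2 + 1) / 2 + n * (n + 1) / 2 = 2 * ((n + 1) * (n + 1 + 1) / 2) + 1 := by
  obtain ⟨a, ha⟩ := Nat.even_mul_succ_self n
  have h1 : (n + 1) * (n + 1 + 1) = n * (n + 1) + 2 * (n + 1) := by ring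
  have h2 : (n + 2) * (n + 2 + 1) = n * (n + 1) + 4 * n + 6 := by ring
  omega

/-- For every `n ≥ 1`, the Yablonskii–Vorob'ev polynomial `Q n` is a monic polynomial
of degree `n(n+1)/2` with integer coefficients. -/
theorem yablonskii_vorobev_monic_degree_int_coeffs
    (Q : ℕ → Polynomial ℝ)
    (hQ0 : Q 0 = 1) (hQ1 : Q 1 = X)
    (hrec : ∀ n, Q (n + 2) * Q n =
      X * (Q (n + 1)) ^ 2 -
        4 * (Q (n + 1) * derivative (derivative (Q (n + 1))) - (derivative (Q (n + 1))) ^ 2)) :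
    ∀ n, 1 ≤ n →
      (Q n).Monic ∧ (Q n).natDegree = n * (n + 1) / 2 ∧
        ∀ k, ∃ m : ℤ, (Q n).coeff k = (m : ℝ) := by
  have hinj : Function.Injective (Int.castRingHom ℝ) := Int.cast_injective
  have key : ∀ n, (Q n).Monic ∧ (Q n).natDegree = n * (n + 1) / 2 ∧
      ∃ p : ℤ[X], Q n = p.map (Int.castRingHom ℝ) := by
    intro n
    induction n using Nat.twoStepInduction with
    | zero => exact ⟨hQ0 ▸ monic_one, by simp [hQ0], 1, by simp [hQ0]⟩
    | one => exact ⟨hQ1 ▸ monic_X, by simp [hQ1], X, by simp [hQ1]⟩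
    | more n ih₀ ih₁ =>
      obtain ⟨hm₀, hd₀, p₀, hp₀⟩ := ih₀
      obtain ⟨hm₁, hd₁, p₁, hp₁⟩ := ih₁
      obtain ⟨hm₂, hd₂⟩ := hm₀.of_mul_eq_yablonskiiVorobevRhs hm₁ (hrec n)
      refine ⟨hm₂, by have := Nat.triangle_add_two_add_triangle n; omega, ?_⟩
      refine exists_map_eq_of_map_mul_eq (r := yablonskiiVorobevRhs p₁) hinj
        (monic_of_injective hinj (hp₀ ▸ hm₀)) ?_
      rw [← hp₀, yablonskiiVorobevRhs_map, ← hp₁, mul_comm]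
      exact hrec n
  intro n _
  obtain ⟨hm, hd, p, hp⟩ := key n
  exact ⟨hm, hd, fun k => ⟨p.coeff k, by simp [hp]⟩⟩
end

section
/- Let n ≥ 1 and suppose the identities (i) Q_{n+1}'·Q_{n-1} − Q_{n+1}·Q_{n-1}' = (2n+1)·Q_n^2, (ii) Q_{n+1}''·Q_{n-1} − Q_{n+1}·Q_{n-1}'' = 2(2n+1)·Q_n·Q_n', and (iii) Q_{n+1}'''·Q_{n-1} − Q_{n+1}·Q_{n-1}''' = 2(2n+1)·(Q_n')^2 + (2n+1)·Q_n·Q_n'' hold, and that Q_n has only simple roots. If x ∈ ℝ is a point where Q_{n+1} crosses Q_{n-1} positively, then Q_{n+1}(x) = Q_{n-1}(x) > 0. -/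
/-!
With `d = Q_{n+1} - Q_{n-1}` and `c = Q_{n-1}(x) = Q_{n+1}(x)`, the left-hand side of the `k`-th
identity evaluated at `x` is `c · d^{(k)}(x)`. Just left of a root of multiplicity `m`, `d` has the
sign of `(-1)^m d^{(m)}(x)`; as `d < 0` there, `d^{(k)}(x) ≥ 0` for every odd `k` such that all
lower derivatives of `d` vanish at `x`. If `Q_n(x) ≠ 0`, then
`c d'(x) = (2n+1) Q_n(x)^2 > 0` with `d'(x) ≥ 0`. If `Q_n(x) = 0`, then `Q_n'(x) ≠ 0` and
`c d'''(x) = 2(2n+1) Q_n'(x)^2 > 0`, so `c ≠ 0`, hence `d'(x) = d''(x) = 0` and `d'''(x) ≥ 0`.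
Either way `c > 0`.
-/

open Polynomial Filter Topology

namespace Polynomial

lemma eventually_nhdsLT_pos_of_odd_of_eval_neg {q : ℝ[X]} {x : ℝ} {k : ℕ} (hk : Odd k)
    (hq : q.eval x < 0) : ∀ᶠ y in 𝓝[<] x, 0 < ((X - C x) ^ k * q).eval y := by
  have hq_near : ∀ᶠ y in 𝓝[<] x, q.eval y < 0 :=
    nhdsWithin_le_nhds (q.continuous.continuousAt.eventually_lt_const hq)
  filter_upwards [hq_near, self_mem_nhdsWithin] with y hqy hyx
  simp only [eval_mul, eval_pow, eval_sub, eval_X, eval_C]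
  exact mul_pos_of_neg_of_neg (hk.pow_neg (sub_neg.mpr hyx)) hqy

lemma eval_iterate_derivative_nonneg_of_eventually_nhdsLT_neg {p : ℝ[X]} {x : ℝ} {k : ℕ}
    (hneg : ∀ᶠ y in 𝓝[<] x, p.eval y < 0) (hk : Odd k)
    (hroot : ∀ i < k, (derivative^[i] p).IsRoot x) :
    0 ≤ (derivative^[k] p).eval x := by
  have hp : p ≠ 0 := by
    rintro rfl
    simpa using hneg.exists
  have hkm : k ≤ p.rootMultiplicity x := by
    obtain ⟨j, rfl⟩ := hk
    exact lt_rootMultiplicity_of_isRoot_iterate_derivative hp fun i hi ↦ hroot i (by omega)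
  rcases hkm.lt_or_eq with hlt | hkm
  · exact (isRoot_iterate_derivative_of_lt_rootMultiplicity hlt).ge
  have hq : 0 ≤ (p /ₘ (X - C x) ^ p.rootMultiplicity x).eval x := by
    by_contra! hq
    have hpos := eventually_nhdsLT_pos_of_odd_of_eval_neg (hkm ▸ hk) hq
    rw [pow_mul_divByMonic_rootMultiplicity_eq] at hpos
    obtain ⟨y, hy_pos, hy_neg⟩ := (hpos.and hneg).exists
    exact hy_pos.not_gt hy_neg
  rw [hkm, eval_iterate_derivative_rootMultiplicity, nsmul_eq_mul]
  positivity

lemma eval_iterate_derivative_mul_sub_of_eval_eq {f g : ℝ[X]} {x : ℝ} (hfg : f.eval x = g.eval x)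
    (k : ℕ) :
    (derivative^[k] f * g - f * derivative^[k] g).eval x =
      g.eval x * (derivative^[k] (f - g)).eval x := by
  simp only [eval_sub, eval_mul, iterate_derivative_sub, hfg]
  ring

end Polynomial

theorem positive_crossing_general (n : ℕ)
    (Qnm1 Qn Qnp1 : Polynomial ℝ)
    (h1 : derivative Qnp1 * Qnm1 - Qnp1 * derivative Qnm1 = C ((2 * n + 1 : ℕ) : ℝ) * Qn ^ 2)
    (h2 : derivative (derivative Qnp1) * Qnm1 - Qnp1 * derivative (derivative Qnm1) =
      2 * C ((2 * n + 1 : ℕ) : ℝ) * Qn * derivative Qn)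
    (h3 : derivative (derivative (derivative Qnp1)) * Qnm1 -
        Qnp1 * derivative (derivative (derivative Qnm1)) =
      2 * C ((2 * n + 1 : ℕ) : ℝ) * (derivative Qn) ^ 2 +
        C ((2 * n + 1 : ℕ) : ℝ) * Qn * derivative (derivative Qn))
    (hsimple : ∀ y : ℝ, Qn.eval y = 0 → (derivative Qn).eval y ≠ 0)
    (x : ℝ)
    (hcross : Qnp1.eval x = Qnm1.eval x ∧ ∃ δ > 0,
      (∀ y, x - δ < y → y < x → Qnp1.eval y < Qnm1.eval y) ∧
      (∀ y, x < y → y < x + δ → Qnp1.eval y > Qnm1.eval y)) :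
    Qnp1.eval x = Qnm1.eval x ∧ Qnm1.eval x > 0 := by
  obtain ⟨hc, δ, hδ, hleft, -⟩ := hcross
  refine ⟨hc, ?_⟩
  set d := Qnp1 - Qnm1
  have hneg : ∀ᶠ y in 𝓝[<] x, d.eval y < 0 := by
    filter_upwards [Ioo_mem_nhdsLT (sub_lt_self x hδ)] with y hy
    simpa [d] using hleft y hy.1 hy.2
  have hd0 : d.IsRoot x := by simp [d, hc]
  have hM : (0 : ℝ) < ((2 * n + 1 : ℕ) : ℝ) := by positivity
  have w : ∀ k, _ = Qnm1.eval x * (derivative^[k] d).eval x :=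
    eval_iterate_derivative_mul_sub_of_eval_eq hc
  have e1 := (w 1).symm.trans (congrArg (eval x) h1)
  have e2 := (w 2).symm.trans (congrArg (eval x) h2)
  have e3 := (w 3).symm.trans (congrArg (eval x) h3)
  simp only [eval_mul, eval_add, eval_pow, eval_C, eval_ofNat] at e1 e2 e3
  clear_value d
  by_contra! hc0
  rcases eq_or_ne (Qn.eval x) 0 with hs | hs
  · have ht := hsimple x hs
    rw [hs] at e1 e2 e3
    have hc_ne : Qnm1.eval x ≠ 0 := fun h ↦ by
      rw [h] at e3
      nlinarith [sq_pos_of_ne_zero ht]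
    have hroot : ∀ i < 3, (derivative^[i] d).IsRoot x := by
      intro i hi
      interval_cases i
      exacts [hd0, by simpa [hc_ne] using e1, by simpa [hc_ne] using e2]
    have := eval_iterate_derivative_nonneg_of_eventually_nhdsLT_neg hneg (by decide) hroot
    nlinarith [sq_pos_of_ne_zero ht]
  · have hroot : ∀ i < 1, (derivative^[i] d).IsRoot x := fun i hi ↦ by
      rwa [Nat.lt_one_iff.mp hi]
    have := eval_iterate_derivative_nonneg_of_eventually_nhdsLT_neg hneg (by decide) hroot
    nlinarith [sq_pos_of_ne_zero hs]

/-- If `Qnp1` (i.e. `Q_{n+1}`) crosses `Qnm1` (i.e. `Q_{n-1}`) positively at `x`,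
then their common value at `x` is positive. -/
theorem positive_crossing (n : ℕ) (hn : 1 ≤ n)
    (Qnm1 Qn Qnp1 : Polynomial ℝ)
    (h1 : derivative Qnp1 * Qnm1 - Qnp1 * derivative Qnm1 = C ((2 * n + 1 : ℕ) : ℝ) * Qn ^ 2)
    (h2 : derivative (derivative Qnp1) * Qnm1 - Qnp1 * derivative (derivative Qnm1) =
      2 * C ((2 * n + 1 : ℕ) : ℝ) * Qn * derivative Qn)
    (h3 : derivative (derivative (derivative Qnp1)) * Qnm1 -
        Qnp1 * derivative (derivative (derivative Qnm1)) =
      2 * C ((2 * n + 1 : ℕ) : ℝ) * (derivative Qn) ^ 2 +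
        C ((2 * n + 1 : ℕ) : ℝ) * Qn * derivative (derivative Qn))
    (hsimple : ∀ y : ℝ, Qn.eval y = 0 → (derivative Qn).eval y ≠ 0)
    (x : ℝ)
    (hcross : Qnp1.eval x = Qnm1.eval x ∧ ∃ δ > 0,
      (∀ y, x - δ < y → y < x → Qnp1.eval y < Qnm1.eval y) ∧
      (∀ y, x < y → y < x + δ → Qnp1.eval y > Qnm1.eval y)) :
    Qnp1.eval x = Qnm1.eval x ∧ Qnm1.eval x > 0 :=
  positive_crossing_general n Qnm1 Qn Qnp1 h1 h2 h3 hsimple x hcross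
end

section
/- Let n ≥ 1 and suppose the three Fukutani–Okamoto–Umemura identities relating Q_{n-1}, Q_n, Q_{n+1} and their derivatives hold (as in the positive-crossing lemma), and that Q_n has only simple roots. If x ∈ ℝ is a point where Q_{n+1} crosses Q_{n-1} negatively, then Q_{n+1}(x) = Q_{n-1}(x) < 0. -/
/-!
Write `D = Q_{n+1} - Q_{n-1}` and `a` for the common value at the crossing point `x`. Evaluated at
`x`, the three identities read `a D'(x) = c Q_n(x)²`, `a D''(x) = 2c Q_n(x) Q_n'(x)` and
`a D'''(x) = 2c Q_n'(x)² + c Q_n(x) Q_n''(x)` with `c = 2n + 1 > 0`. A negative crossing forces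
`D'(x) ≤ 0`, so if `a ≥ 0` the first identity gives `Q_n(x) = 0`, hence `Q_n'(x) ≠ 0` since the
root is simple. Now the third identity gives `a D'''(x) = 2c Q_n'(x)² > 0`, so `a > 0`, and then the
first two give `D'(x) = D''(x) = 0`. With `D'''(x) > 0` this makes `D > 0` just to the right of `x`,
contradicting the crossing.
-/

open Polynomial Filter Topology

namespace Polynomial

theorem eventually_pos_nhdsGT_of_iterate_derivative_pos (P : ℝ[X]) {x : ℝ} (k : ℕ)
    (hzero : ∀ i < k, (derivative^[i] P).eval x = 0) (hpos : 0 < (derivative^[k] P).eval x) :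
    ∀ᶠ y in 𝓝[>] x, 0 < P.eval y := by
  induction k generalizing P with
  | zero =>
    exact nhdsWithin_le_nhds (P.continuous.continuousAt.eventually (lt_mem_nhds hpos))
  | succ k ih =>
    have hderiv := ih (derivative P) (fun i hi => hzero (i + 1) (by omega)) hpos
    obtain ⟨u, hxu, hu⟩ := (mem_nhdsGT_iff_exists_Ioo_subset).1 hderiv
    have hmono : StrictMonoOn (fun t => P.eval t) (Set.Icc x u) := by
      refine strictMonoOn_of_deriv_pos (convex_Icc x u) P.continuousOn fun t ht => ?_
      rw [interior_Icc] at ht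
      rw [Polynomial.deriv]
      exact hu ht
    have hP0 : P.eval x = 0 := hzero 0 k.succ_pos
    filter_upwards [Ioo_mem_nhdsGT hxu] with y hy
    simpa [hP0] using hmono (Set.left_mem_Icc.mpr hxu.le) (Set.Ioo_subset_Icc_self hy) hy.1

theorem iterate_derivative_eval_nonpos_of_eventually_neg {P : ℝ[X]} {x : ℝ} {k : ℕ}
    (hzero : ∀ i < k, (derivative^[i] P).eval x = 0)
    (hneg : ∀ᶠ y in 𝓝[>] x, P.eval y < 0) : (derivative^[k] P).eval x ≤ 0 := by
  by_contra! hpos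
  obtain ⟨y, hy, hy'⟩ :=
    ((eventually_pos_nhdsGT_of_iterate_derivative_pos P k hzero hpos).and hneg).exists
  linarith

theorem mul_eval_iterate_derivative_sub {R : Type*} [CommRing R] {P Q : R[X]} {x a : R}
    (hP : P.eval x = a) (hQ : Q.eval x = a) (k : ℕ) :
    a * (derivative^[k] (P - Q)).eval x =
      (derivative^[k] P * Q - P * derivative^[k] Q).eval x := by
  simp only [iterate_derivative_sub, eval_sub, eval_mul, hP, hQ]
  ring

end Polynomial

theorem negative_crossing_general (n : ℕ)
    (Qnm1 Qn Qnp1 : Polynomial ℝ)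
    (h1 : derivative Qnp1 * Qnm1 - Qnp1 * derivative Qnm1 = C ((2 * n + 1 : ℕ) : ℝ) * Qn ^ 2)
    (h2 : derivative (derivative Qnp1) * Qnm1 - Qnp1 * derivative (derivative Qnm1) =
      2 * C ((2 * n + 1 : ℕ) : ℝ) * Qn * derivative Qn)
    (h3 : derivative (derivative (derivative Qnp1)) * Qnm1 -
        Qnp1 * derivative (derivative (derivative Qnm1)) =
      2 * C ((2 * n + 1 : ℕ) : ℝ) * (derivative Qn) ^ 2 +
        C ((2 * n + 1 : ℕ) : ℝ) * Qn * derivative (derivative Qn))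
    (hsimple : ∀ y : ℝ, Qn.eval y = 0 → (derivative Qn).eval y ≠ 0)
    (x : ℝ)
    (hcross : Qnp1.eval x = Qnm1.eval x ∧ ∃ δ > 0,
      (∀ y, x - δ < y → y < x → Qnp1.eval y > Qnm1.eval y) ∧
      (∀ y, x < y → y < x + δ → Qnp1.eval y < Qnm1.eval y)) :
    Qnp1.eval x = Qnm1.eval x ∧ Qnm1.eval x < 0 := by
  obtain ⟨heq, δ, hδ, -, hR⟩ := hcross
  refine ⟨heq, ?_⟩
  set a := Qnm1.eval x
  have e1 := (mul_eval_iterate_derivative_sub heq rfl 1).trans (congrArg (eval x) h1)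
  have e2 := (mul_eval_iterate_derivative_sub heq rfl 2).trans (congrArg (eval x) h2)
  have e3 := (mul_eval_iterate_derivative_sub heq rfl 3).trans (congrArg (eval x) h3)
  simp only [eval_mul, eval_add, eval_pow, eval_C, eval_ofNat] at e1 e2 e3
  set D := Qnp1 - Qnm1
  have hD : D.eval x = 0 := by rw [eval_sub, heq, sub_self]
  have hDneg : ∀ᶠ y in 𝓝[>] x, D.eval y < 0 := by
    filter_upwards [Ioo_mem_nhdsGT (by linarith : x < x + δ)] with y hy
    simpa [D] using hR y hy.1 hy.2
  by_contra! ha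
  have hroot : Qn.eval x = 0 := by
    have hslope := iterate_derivative_eval_nonpos_of_eventually_neg (k := 1)
      (fun i hi => by rwa [Nat.lt_one_iff.mp hi]) hDneg
    have hc : (0 : ℝ) < (2 * n + 1 : ℕ) := by positivity
    refine pow_eq_zero_iff two_ne_zero |>.mp (le_antisymm ?_ (sq_nonneg _))
    nlinarith [mul_nonpos_of_nonneg_of_nonpos ha hslope]
  have he3 : 0 < a * (derivative^[3] D).eval x := by
    rw [e3, hroot, mul_zero, zero_mul, add_zero]
    have := hsimple x hroot
    positivity
  have ha0 : a ≠ 0 := left_ne_zero_of_mul he3.ne'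
  have hD1 : (derivative^[1] D).eval x = 0 := by simpa [hroot, ha0] using e1
  have hD2 : (derivative^[2] D).eval x = 0 := by simpa [hroot, ha0] using e2
  have hD3 := iterate_derivative_eval_nonpos_of_eventually_neg (k := 3)
    (fun i hi => by interval_cases i <;> assumption) hDneg
  exact not_lt.mpr hD3 (pos_of_mul_pos_right he3 ha)

/-- If `Qnp1` (i.e. `Q_{n+1}`) crosses `Qnm1` (i.e. `Q_{n-1}`) negatively at `x`,
then their common value at `x` is negative. -/
theorem negative_crossing (n : ℕ) (hn : 1 ≤ n)
    (Qnm1 Qn Qnp1 : Polynomial ℝ)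
    (h1 : derivative Qnp1 * Qnm1 - Qnp1 * derivative Qnm1 = C ((2 * n + 1 : ℕ) : ℝ) * Qn ^ 2)
    (h2 : derivative (derivative Qnp1) * Qnm1 - Qnp1 * derivative (derivative Qnm1) =
      2 * C ((2 * n + 1 : ℕ) : ℝ) * Qn * derivative Qn)
    (h3 : derivative (derivative (derivative Qnp1)) * Qnm1 -
        Qnp1 * derivative (derivative (derivative Qnm1)) =
      2 * C ((2 * n + 1 : ℕ) : ℝ) * (derivative Qn) ^ 2 +
        C ((2 * n + 1 : ℕ) : ℝ) * Qn * derivative (derivative Qn))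
    (hsimple : ∀ y : ℝ, Qn.eval y = 0 → (derivative Qn).eval y ≠ 0)
    (x : ℝ)
    (hcross : Qnp1.eval x = Qnm1.eval x ∧ ∃ δ > 0,
      (∀ y, x - δ < y → y < x → Qnp1.eval y > Qnm1.eval y) ∧
      (∀ y, x < y → y < x + δ → Qnp1.eval y < Qnm1.eval y)) :
    Qnp1.eval x = Qnm1.eval x ∧ Qnm1.eval x < 0 :=
  negative_crossing_general n Qnm1 Qn Qnp1 h1 h2 h3 hsimple x hcross
end

section
/- Let P and Q be real polynomials with positive leading coefficients and only simple roots, with no common real roots, whose real roots interlace. Suppose both P and Q have at least one real root, min(Z_P) > min(Z_Q), and max(Z_P) < max(Z_Q). If P(0) > 0 and Q(0) > 0, then |Z_Q ∩ (−∞,0)| = |Z_P ∩ (−∞,0)| + 1 and |Z_Q ∩ (0,∞)| = |Z_P ∩ (0,∞)|. -/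
/-!
If every gap between two points of a finite set `S ⊆ ℝ` contains a point of a finite set `T`,
then `|S| ≤ |T| + 1`, and `|S| + 1 ≤ |T|` when `T` also has points below and above `S`. Applied
to the roots of `Q` and `P`, and to their parts in `(-∞, 0)` and `(0, ∞)`, this gives
`|Z_Q| = |Z_P| + 1` and shows that each half of `Z_Q` exceeds the corresponding half of `Z_P` by
at most one. The extra root cannot lie in `(0, ∞)`: a polynomial with positive leading
coefficient has `P(0)` of the sign of `∏ (-r)` over its real roots `r` (with multiplicity), so
if `P(0) > 0` and the roots are simple, `P` has an even number of positive roots.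
-/

open Polynomial

/-- The set of real roots of a real polynomial. -/
def realRoots (P : Polynomial ℝ) : Set ℝ := {x : ℝ | P.eval x = 0}

open Set

section Separation

variable {α : Type*} [LinearOrder α] {S T I : Set α}

def SeparatedBy (S T : Set α) : Prop :=
  ∀ a ∈ S, ∀ b ∈ S, a < b → ∃ c ∈ T, a < c ∧ c < b

theorem SeparatedBy.inter (h : SeparatedBy S T) (hI : I.OrdConnected) :
    SeparatedBy (S ∩ I) (T ∩ I) := by
  intro a ha b hb hab
  obtain ⟨c, hc, hac, hcb⟩ := h a ha.1 b hb.1 hab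
  exact ⟨c, ⟨hc, hI.out ha.2 hb.2 ⟨hac.le, hcb.le⟩⟩, hac, hcb⟩

theorem SeparatedBy.mono_left {S' : Set α} (h : SeparatedBy S T) (hS' : S' ⊆ S) :
    SeparatedBy S' T :=
  fun a ha b hb => h a (hS' ha) b (hS' hb)

theorem SeparatedBy.inter_right (h : SeparatedBy S T) (hI : I.OrdConnected) (hSI : S ⊆ I) :
    SeparatedBy S (T ∩ I) := by
  simpa only [inter_eq_left.2 hSI] using h.inter hI

theorem SeparatedBy.ncard_le (hS : S.Finite) (hT : T.Finite) (h : SeparatedBy S T) :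
    S.ncard ≤ T.ncard + 1 := by
  lift S to Finset α using hS
  induction S using Finset.induction_on_max generalizing T with
  | empty => simp
  | insert a S hlt ih =>
    rcases S.eq_empty_or_nonempty with rfl | hne
    · simp
    obtain ⟨b, hb, hmax⟩ := S.exists_max_image id hne
    obtain ⟨c, hcT, hbc, -⟩ := h b (by simp [hb]) a (by simp) (hlt b hb)
    have hsep : SeparatedBy (S : Set α) (T ∩ Iio c) :=
      (h.mono_left (by simp)).inter_right ordConnected_Iio fun x hx => (hmax x hx).trans_lt hbc
    have hcard : (T ∩ Iio c).ncard < T.ncard :=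
      ncard_lt_ncard (inter_subset_left.ssubset_of_not_subset
        fun hsub => lt_irrefl c (hsub hcT).2) hT
    have hS := ih (hT.inter_of_left _) hsep
    rw [Finset.coe_insert, ncard_insert_of_notMem (fun h => lt_irrefl a (hlt a h)),
      ncard_coe_finset]
    rw [ncard_coe_finset] at hS
    omega

theorem SeparatedBy.ncard_add_one_le (hS : S.Finite) (hT : T.Finite) (h : SeparatedBy S T)
    (hne : S.Nonempty) {u t : α} (hu : u ∈ T) (ht : t ∈ T) (hSut : S ⊆ Ioo u t) :
    S.ncard + 1 ≤ T.ncard := by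
  have hle := (h.inter_right ordConnected_Ioo hSut).ncard_le hS (hT.inter_of_left _)
  obtain ⟨s, hs⟩ := hne
  have hut : u ≠ t := ((hSut hs).1.trans (hSut hs).2).ne
  have hsub : insert u (insert t (T ∩ Ioo u t)) ⊆ T :=
    insert_subset hu (insert_subset ht inter_subset_left)
  have := ncard_le_ncard hsub hT
  rw [ncard_insert_of_notMem (by simp [hut]) ((hT.inter_of_left _).insert t),
    ncard_insert_of_notMem (by simp) (hT.inter_of_left _)] at this
  omega

theorem ncard_inter_Iio_add_ncard_inter_Ioi {Z : Set α} (hZ : Z.Finite) {a : α} (ha : a ∉ Z) :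
    (Z ∩ Iio a).ncard + (Z ∩ Ioi a).ncard = Z.ncard := by
  have : Z \ Iio a = Z ∩ Ioi a := by
    ext x
    simp only [mem_sdiff, mem_Iio, not_lt, mem_inter_iff, mem_Ioi]
    exact and_congr_right fun hx => (ne_of_mem_of_not_mem hx ha).symm.le_iff_lt
  rw [← this, ncard_inter_add_ncard_sdiff_eq_ncard Z _ hZ]

end Separation

theorem Multiset.prod_pos_iff_even_countP_neg {R : Type*} [CommRing R] [LinearOrder R]
    [IsStrictOrderedRing R] {s : Multiset R} (hs : (0 : R) ∉ s) :
    0 < s.prod ↔ Even (s.countP (· < 0)) := by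
  induction s using Multiset.induction_on with
  | empty => simp
  | cons a s ih =>
    rw [Multiset.mem_cons, not_or] at hs
    have ih := ih hs.2
    have hprod : s.prod ≠ 0 := Multiset.prod_ne_zero hs.2
    rw [Multiset.prod_cons, Multiset.countP_cons]
    rcases (Ne.symm hs.1).lt_or_gt with ha | ha
    · rw [if_pos ha, Nat.even_add_one, ← ih, ← smul_eq_mul, smul_pos_iff_of_neg_left ha,
        not_lt, hprod.le_iff_lt]
    · rw [if_neg ha.not_gt, add_zero, ← ih, mul_pos_iff_of_pos_left ha]

namespace Polynomial

theorem eval_pos_of_roots_eq_zero {g : ℝ[X]} (hlead : 0 < g.leadingCoeff) (hroots : g.roots = 0)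
    (x : ℝ) : 0 < g.eval x := by
  have hg : g ≠ 0 := leadingCoeff_ne_zero.mp hlead.ne'
  have hne : ∀ y, g.eval y ≠ 0 := fun y hy => by
    simpa [hroots] using (mem_roots hg).2 hy
  obtain ⟨y, hy⟩ : ∃ y, 0 < g.eval y := by
    rcases le_or_gt g.degree 0 with hdeg | hdeg
    · rw [eq_C_of_degree_le_zero hdeg] at hlead ⊢
      exact ⟨0, by simpa using hlead⟩
    · exact ((tendsto_atTop_of_leadingCoeff_nonneg g hdeg hlead.le).eventually_gt_atTop 0).exists
  by_contra! hx
  obtain ⟨z, -, hz⟩ := intermediate_value_uIcc g.continuous.continuousOn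
    (mem_uIcc.2 (Or.inl ⟨hx, hy.le⟩))
  exact hne z hz

theorem even_countP_roots_pos {P : ℝ[X]} (hlead : 0 < P.leadingCoeff) (h0 : 0 < P.eval 0) :
    Even (P.roots.countP (0 < ·)) := by
  obtain ⟨g, hPg, -, hg⟩ := exists_prod_multiset_X_sub_C_mul P
  have hglead : 0 < g.leadingCoeff := by
    rwa [← hPg, leadingCoeff_mul, (monic_multisetProd_X_sub_C _).leadingCoeff, one_mul] at hlead
  have heval : P.eval 0 = (P.roots.map Neg.neg).prod * g.eval 0 := by
    conv_lhs => rw [← hPg]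
    simp [eval_multiset_prod, Multiset.map_map]
  have hprod : 0 < (P.roots.map Neg.neg).prod :=
    pos_of_mul_pos_left (heval ▸ h0) (eval_pos_of_roots_eq_zero hglead hg 0).le
  have h0 : (0 : ℝ) ∉ P.roots.map Neg.neg := by
    simp [mem_roots', h0.ne']
  have heven := (Multiset.prod_pos_iff_even_countP_neg h0).1 hprod
  rw [Multiset.countP_map] at heven
  simpa [Multiset.countP_eq_card_filter] using heven

theorem nodup_roots_of_forall_eval_derivative_ne_zero {P : ℝ[X]}
    (hsimple : ∀ x, P.eval x = 0 → (derivative P).eval x ≠ 0) : P.roots.Nodup := by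
  rcases eq_or_ne P 0 with rfl | hP
  · simp
  refine Multiset.nodup_iff_count_le_one.2 fun x => ?_
  by_contra! hx
  rw [count_roots, one_lt_rootMultiplicity_iff_isRoot hP] at hx
  exact hsimple x hx.1 hx.2

end Polynomial

theorem ncard_realRoots_inter_eq_countP {P : ℝ[X]} (hP : P ≠ 0) (hnd : P.roots.Nodup)
    (p : ℝ → Prop) [DecidablePred p] :
    (realRoots P ∩ {x | p x}).ncard = P.roots.countP p := by
  have : realRoots P ∩ {x | p x} = ↑(P.roots.toFinset.filter p) := by
    ext x
    simp [realRoots, mem_roots hP]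
  rw [this, ncard_coe_finset, ← Multiset.toFinset_filter, Multiset.toFinset_card_of_nodup
    (hnd.filter p), Multiset.countP_eq_card_filter]

theorem even_ncard_realRoots_inter_Ioi_zero {P : ℝ[X]} (hlead : 0 < P.leadingCoeff)
    (hsimple : ∀ x, P.eval x = 0 → (derivative P).eval x ≠ 0) (h0 : 0 < P.eval 0) :
    Even (realRoots P ∩ Ioi 0).ncard := by
  have hP : P ≠ 0 := leadingCoeff_ne_zero.mp hlead.ne'
  change Even (realRoots P ∩ {x | 0 < x}).ncard
  rw [ncard_realRoots_inter_eq_countP hP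
    (nodup_roots_of_forall_eval_derivative_ne_zero hsimple)]
  exact even_countP_roots_pos hlead h0

theorem interlacing_root_count_pos_pos_general (P Q : Polynomial ℝ)
    (hPlead : 0 < P.leadingCoeff) (hQlead : 0 < Q.leadingCoeff)
    (hPsimple : ∀ x : ℝ, P.eval x = 0 → (derivative P).eval x ≠ 0)
    (hQsimple : ∀ x : ℝ, Q.eval x = 0 → (derivative Q).eval x ≠ 0)
    (hinter1 : ∀ a ∈ realRoots P, ∀ b ∈ realRoots P, a < b →
      ∃ c ∈ realRoots Q, a < c ∧ c < b)
    (hinter2 : ∀ a ∈ realRoots Q, ∀ b ∈ realRoots Q, a < b →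
      ∃ c ∈ realRoots P, a < c ∧ c < b)
    (hPne : (realRoots P).Nonempty) (hQne : (realRoots Q).Nonempty)
    (hmin : sInf (realRoots P) > sInf (realRoots Q))
    (hmax : sSup (realRoots P) < sSup (realRoots Q))
    (hP0 : P.eval 0 > 0) (hQ0 : Q.eval 0 > 0) :
    (realRoots Q ∩ Set.Iio 0).ncard = (realRoots P ∩ Set.Iio 0).ncard + 1 ∧
    (realRoots Q ∩ Set.Ioi 0).ncard = (realRoots P ∩ Set.Ioi 0).ncard := by
  have hPf : (realRoots P).Finite := finite_setOfPred_isRoot (leadingCoeff_ne_zero.mp hPlead.ne')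
  have hQf : (realRoots Q).Finite := finite_setOfPred_isRoot (leadingCoeff_ne_zero.mp hQlead.ne')
  have hPsub : realRoots P ⊆ Ioo (sInf (realRoots Q)) (sSup (realRoots Q)) := fun x hx =>
    ⟨hmin.trans_le (csInf_le hPf.bddBelow hx), (le_csSup hPf.bddAbove hx).trans_lt hmax⟩
  have hQP : (realRoots Q).ncard ≤ (realRoots P).ncard + 1 := SeparatedBy.ncard_le hQf hPf hinter2
  have hPQ : (realRoots P).ncard + 1 ≤ (realRoots Q).ncard := SeparatedBy.ncard_add_one_le hPf hQf
    hinter1 hPne (hQne.csInf_mem hQf) (hQne.csSup_mem hQf) hPsub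
  have hneg : (realRoots Q ∩ Iio 0).ncard ≤ (realRoots P ∩ Iio 0).ncard + 1 :=
    (SeparatedBy.inter hinter2 ordConnected_Iio).ncard_le (hQf.inter_of_left _)
      (hPf.inter_of_left _)
  have hpos : (realRoots Q ∩ Ioi 0).ncard ≤ (realRoots P ∩ Ioi 0).ncard + 1 :=
    (SeparatedBy.inter hinter2 ordConnected_Ioi).ncard_le (hQf.inter_of_left _)
      (hPf.inter_of_left _)
  obtain ⟨k, hk⟩ := even_ncard_realRoots_inter_Ioi_zero hPlead hPsimple hP0
  obtain ⟨l, hl⟩ := even_ncard_realRoots_inter_Ioi_zero hQlead hQsimple hQ0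
  have hPsplit := ncard_inter_Iio_add_ncard_inter_Ioi hPf hP0.ne'
  have hQsplit := ncard_inter_Iio_add_ncard_inter_Ioi hQf hQ0.ne'
  omega

theorem interlacing_root_count_pos_pos (P Q : Polynomial ℝ)
    (hPlead : 0 < P.leadingCoeff) (hQlead : 0 < Q.leadingCoeff)
    (hPsimple : ∀ x : ℝ, P.eval x = 0 → (derivative P).eval x ≠ 0)
    (hQsimple : ∀ x : ℝ, Q.eval x = 0 → (derivative Q).eval x ≠ 0)
    (hnocommon : ∀ x : ℝ, ¬(P.eval x = 0 ∧ Q.eval x = 0))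
    (hinter1 : ∀ a ∈ realRoots P, ∀ b ∈ realRoots P, a < b →
      ∃ c ∈ realRoots Q, a < c ∧ c < b)
    (hinter2 : ∀ a ∈ realRoots Q, ∀ b ∈ realRoots Q, a < b →
      ∃ c ∈ realRoots P, a < c ∧ c < b)
    (hPne : (realRoots P).Nonempty) (hQne : (realRoots Q).Nonempty)
    (hmin : sInf (realRoots P) > sInf (realRoots Q))
    (hmax : sSup (realRoots P) < sSup (realRoots Q))
    (hP0 : P.eval 0 > 0) (hQ0 : Q.eval 0 > 0) :
    (realRoots Q ∩ Set.Iio 0).ncard = (realRoots P ∩ Set.Iio 0).ncard + 1 ∧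
    (realRoots Q ∩ Set.Ioi 0).ncard = (realRoots P ∩ Set.Ioi 0).ncard :=
  interlacing_root_count_pos_pos_general P Q hPlead hQlead hPsimple hQsimple hinter1 hinter2 hPne
    hQne hmin hmax hP0 hQ0
end

section
/- Let P and Q be real polynomials with positive leading coefficients and only simple roots, with no common real roots, whose real roots interlace. Suppose both P and Q have at least one real root, min(Z_P) > min(Z_Q), and max(Z_P) < max(Z_Q). If P(0) > 0 and Q(0) < 0, then |Z_Q ∩ (−∞,0)| = |Z_P ∩ (−∞,0)| and |Z_Q ∩ (0,∞)| = |Z_P ∩ (0,∞)| + 1. -/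
/-!
Each of the two finite root sets separates the other. As the roots of `P` lie strictly between
the extreme roots of `Q`, this forces `Q` to have exactly one root more than `P`, while on
either side of `0` it has at most one root more than `P`. A polynomial with positive leading
coefficient has the sign `(-1) ^ k` at `0`, where `k` counts its positive roots with
multiplicity; for simple roots that is the number of positive roots, so it is even for `P` and
odd for `Q`. These parities leave only the claimed split.
-/

open Polynomial

namespace Set

variable {α : Type*} [LinearOrder α]

def SeparatedBy (s t : Set α) : Prop :=
  ∀ a ∈ s, ∀ b ∈ s, a < b → ∃ c ∈ t, a < c ∧ c < b

theorem SeparatedBy.inter_of_ordConnected {s t I : Set α} (h : s.SeparatedBy t)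
    (hI : I.OrdConnected) : (s ∩ I).SeparatedBy (t ∩ I) := by
  intro a ha b hb hab
  obtain ⟨c, hct, hac, hcb⟩ := h a ha.1 b hb.1 hab
  exact ⟨c, ⟨hct, hI.out ha.2 hb.2 ⟨hac.le, hcb.le⟩⟩, hac, hcb⟩

theorem SeparatedBy.card_le {s t : Finset α} (h : (s : Set α).SeparatedBy t) :
    s.card ≤ t.card + 1 := by
  classical
  induction s using Finset.induction_on_max generalizing t with
  | empty => simp
  | insert a s hlt ih =>
    rcases s.eq_empty_or_nonempty with rfl | hne
    · simp
    obtain ⟨c, hct, hmc, hca⟩ := h _ (by simp [s.max'_mem hne]) a (by simp)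
      (hlt _ (s.max'_mem hne))
    have hbelow : (s : Set α).SeparatedBy ↑(t.filter (· < c)) := by
      intro x hx y hy hxy
      obtain ⟨z, hzt, hxz, hzy⟩ := h x (by simp [Finset.mem_coe.mp hx]) y
        (by simp [Finset.mem_coe.mp hy]) hxy
      exact ⟨z, Finset.mem_filter.mpr ⟨hzt, hzy.trans ((s.le_max' y hy).trans_lt hmc)⟩,
        hxz, hzy⟩
    have hlt_card : (t.filter (· < c)).card < t.card :=
      Finset.card_lt_card (Finset.filter_ssubset.mpr ⟨c, hct, lt_irrefl c⟩)
    have hs_card := ih hbelow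
    rw [Finset.card_insert_of_notMem fun ha => lt_irrefl a (hlt a ha)]
    omega

theorem SeparatedBy.ncard_le {s t : Set α} (h : s.SeparatedBy t) (ht : t.Finite) :
    s.ncard ≤ t.ncard + 1 := by
  rcases s.finite_or_infinite with hs | hs
  · lift s to Finset α using hs
    lift t to Finset α using ht
    simpa using h.card_le
  · simp [hs.ncard]

theorem ncard_eq_ncard_add_one_of_separatedBy {s t : Set α} (hs : s.Finite) (ht : t.Finite)
    (hst : s.SeparatedBy t) (hts : t.SeparatedBy s) (hne : t.Nonempty) {a b : α}
    (ha : a ∈ s) (hb : b ∈ s) (htab : t ⊆ Ioo a b) : s.ncard = t.ncard + 1 := by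
  have hab : a < b := by obtain ⟨x, hx⟩ := hne; exact (htab hx).1.trans (htab hx).2
  have hinner : t.ncard ≤ (s ∩ Ioo a b).ncard + 1 := by
    have := (hts.inter_of_ordConnected (ordConnected_Ioo (a := a) (b := b))).ncard_le
      (hs.inter_of_left _)
    rwa [inter_eq_left.mpr htab] at this
  have houter : (s ∩ Ioo a b).ncard + 2 ≤ s.ncard := by
    calc (s ∩ Ioo a b).ncard + 2 = (s ∩ Ioo a b ∪ {a, b}).ncard := by
          rw [ncard_union_eq (by simp) (hs.inter_of_left _), ncard_pair hab.ne]
      _ ≤ s.ncard :=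
          ncard_le_ncard (union_subset inter_subset_left (by simp [ha, hb, insert_subset_iff])) hs
  have hs_le := hst.ncard_le ht
  omega

theorem ncard_eq_ncard_inter_Iio_add_ncard_inter_Ioi {s : Set α} (hs : s.Finite) {a : α}
    (ha : a ∉ s) : s.ncard = (s ∩ Iio a).ncard + (s ∩ Ioi a).ncard := by
  have hdisj : Disjoint (s ∩ Iio a) (s ∩ Ioi a) :=
    disjoint_left.mpr fun _ h₁ h₂ => lt_asymm h₁.2 h₂.2
  rw [← ncard_union_eq hdisj (hs.inter_of_left _) (hs.inter_of_left _),
    ← inter_union_distrib_left, Iio_union_Ioi, ← sdiff_eq, sdiff_singleton_eq_self ha]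

end Set

theorem Multiset.zero_lt_neg_one_pow_countP_pos_mul_prod_map_neg {R : Type*} [CommRing R]
    [LinearOrder R] [IsStrictOrderedRing R] {s : Multiset R} (h0 : (0 : R) ∉ s) :
    0 < (-1) ^ s.countP (0 < ·) * (s.map (-·)).prod := by
  induction s using Multiset.induction_on with
  | empty => simp
  | cons a s ih =>
    rw [Multiset.mem_cons, not_or] at h0
    have ih := ih h0.2
    rw [Multiset.countP_cons, Multiset.map_cons, Multiset.prod_cons]
    rcases (Ne.symm h0.1).lt_or_gt with ha | ha
    · rw [if_neg ha.not_gt, add_zero]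
      nlinarith
    · rw [if_pos ha, pow_succ]
      nlinarith

namespace Polynomial

theorem eval_pos_of_roots_eq_zero_s7 {q : ℝ[X]} (hq : q.roots = 0) (hlc : 0 < q.leadingCoeff)
    (x : ℝ) : 0 < q.eval x := by
  have hq0 : q ≠ 0 := leadingCoeff_ne_zero.mp hlc.ne'
  have hnoroot : ∀ y, q.eval y ≠ 0 := fun y hy => by
    simpa [hq] using (mem_roots hq0).mpr hy
  obtain ⟨y, hy⟩ : ∃ y, 0 < q.eval y := by
    rcases le_or_gt q.degree 0 with hdeg | hdeg
    · refine ⟨0, ?_⟩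
      rwa [leadingCoeff, natDegree_eq_zero_iff_degree_le_zero.mpr hdeg,
        coeff_zero_eq_eval_zero] at hlc
    · exact ((q.tendsto_atTop_of_leadingCoeff_nonneg hdeg hlc.le).eventually_gt_atTop 0).exists
  by_contra! hx
  obtain ⟨z, hz⟩ := intermediate_value_univ x y q.continuous ⟨hx, hy.le⟩
  exact hnoroot z hz

theorem eval_zero_pos_iff_even_countP_roots_pos {P : ℝ[X]} (hlc : 0 < P.leadingCoeff)
    (h0 : P.eval 0 ≠ 0) : 0 < P.eval 0 ↔ Even (P.roots.countP (0 < ·)) := by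
  obtain ⟨q, hPq, -, hq⟩ := exists_prod_multiset_X_sub_C_mul P
  have hqlc : 0 < q.leadingCoeff := by
    rwa [← hPq, leadingCoeff_mul, (monic_multisetProd_X_sub_C _).leadingCoeff, one_mul] at hlc
  have hsign := Multiset.zero_lt_neg_one_pow_countP_pos_mul_prod_map_neg
    (mt (isRoot_of_mem_roots (p := P)) h0)
  have heval : P.eval 0 = (P.roots.map (-·)).prod * q.eval 0 := by
    conv_lhs => rw [← hPq]
    simp [eval_multiset_prod, Multiset.map_map]
  have hq0 := eval_pos_of_roots_eq_zero_s7 hq hqlc 0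
  rcases Nat.even_or_odd (P.roots.countP (0 < ·)) with h | h
  · simp only [h.neg_one_pow, one_mul] at hsign
    simp only [h, iff_true, heval]
    positivity
  · simp only [h.neg_one_pow, neg_one_mul, neg_pos] at hsign
    simp only [Nat.not_even_iff_odd.mpr h, iff_false, heval, not_lt]
    nlinarith

theorem nodup_roots_of_eval_derivative_ne_zero {R : Type*} [CommRing R] [IsDomain R] {P : R[X]}
    (h : ∀ x, P.eval x = 0 → P.derivative.eval x ≠ 0) : P.roots.Nodup := by
  classical
  have hP : P ≠ 0 := by rintro rfl; exact h 0 eval_zero (by simp)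
  refine Multiset.nodup_iff_count_le_one.mpr fun x => ?_
  rw [count_roots]
  by_contra! hx
  obtain ⟨hroot, hderiv⟩ := (one_lt_rootMultiplicity_iff_isRoot hP).mp hx
  exact h x hroot hderiv

end Polynomial

theorem ncard_realRoots_inter_Ioi {P : ℝ[X]} (hP : P ≠ 0) (hnd : P.roots.Nodup) (a : ℝ) :
    (realRoots P ∩ Set.Ioi a).ncard = P.roots.countP (a < ·) := by
  classical
  have hcoe : realRoots P ∩ Set.Ioi a = ↑(P.roots.filter (a < ·)).toFinset := by
    ext x; simp [realRoots, mem_roots hP]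
  rw [hcoe, Set.ncard_coe_finset, Multiset.toFinset_card_of_nodup (hnd.filter _),
    Multiset.countP_eq_card_filter]

theorem interlacing_root_count_pos_neg_general (P Q : Polynomial ℝ)
    (hPlead : 0 < P.leadingCoeff) (hQlead : 0 < Q.leadingCoeff)
    (hPsimple : ∀ x : ℝ, P.eval x = 0 → (derivative P).eval x ≠ 0)
    (hQsimple : ∀ x : ℝ, Q.eval x = 0 → (derivative Q).eval x ≠ 0)
    (hinter1 : ∀ a ∈ realRoots P, ∀ b ∈ realRoots P, a < b →
      ∃ c ∈ realRoots Q, a < c ∧ c < b)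
    (hinter2 : ∀ a ∈ realRoots Q, ∀ b ∈ realRoots Q, a < b →
      ∃ c ∈ realRoots P, a < c ∧ c < b)
    (hPne : (realRoots P).Nonempty) (hQne : (realRoots Q).Nonempty)
    (hmin : sInf (realRoots P) > sInf (realRoots Q))
    (hmax : sSup (realRoots P) < sSup (realRoots Q))
    (hP0 : P.eval 0 > 0) (hQ0 : Q.eval 0 < 0) :
    (realRoots Q ∩ Set.Iio 0).ncard = (realRoots P ∩ Set.Iio 0).ncard ∧
    (realRoots Q ∩ Set.Ioi 0).ncard = (realRoots P ∩ Set.Ioi 0).ncard + 1 := by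
  have hP : P ≠ 0 := leadingCoeff_ne_zero.mp hPlead.ne'
  have hQ : Q ≠ 0 := leadingCoeff_ne_zero.mp hQlead.ne'
  have hPfin : (realRoots P).Finite := finite_setOfPred_isRoot hP
  have hQfin : (realRoots Q).Finite := finite_setOfPred_isRoot hQ
  have hPQ : realRoots P ⊆ Set.Ioo (sInf (realRoots Q)) (sSup (realRoots Q)) := fun x hx =>
    ⟨hmin.trans_le (csInf_le hPfin.bddBelow hx), (le_csSup hPfin.bddAbove hx).trans_lt hmax⟩
  have htotal := Set.ncard_eq_ncard_add_one_of_separatedBy hQfin hPfin hinter2 hinter1 hPne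
    (hQne.csInf_mem hQfin) (hQne.csSup_mem hQfin) hPQ
  have hsplitP := Set.ncard_eq_ncard_inter_Iio_add_ncard_inter_Ioi hPfin hP0.ne'
  have hsplitQ := Set.ncard_eq_ncard_inter_Iio_add_ncard_inter_Ioi hQfin hQ0.ne
  have hneg := (Set.SeparatedBy.inter_of_ordConnected hinter2
    (Set.ordConnected_Iio (a := 0))).ncard_le (hPfin.inter_of_left _)
  have hpos := (Set.SeparatedBy.inter_of_ordConnected hinter2
    (Set.ordConnected_Ioi (a := 0))).ncard_le (hPfin.inter_of_left _)
  have hPeven : Even (realRoots P ∩ Set.Ioi 0).ncard := by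
    rw [ncard_realRoots_inter_Ioi hP (nodup_roots_of_eval_derivative_ne_zero hPsimple)]
    exact (eval_zero_pos_iff_even_countP_roots_pos hPlead hP0.ne').mp hP0
  have hQodd : ¬Even (realRoots Q ∩ Set.Ioi 0).ncard := by
    rw [ncard_realRoots_inter_Ioi hQ (nodup_roots_of_eval_derivative_ne_zero hQsimple)]
    exact fun h => hQ0.asymm ((eval_zero_pos_iff_even_countP_roots_pos hQlead hQ0.ne).mpr h)
  rw [Nat.even_iff] at hPeven hQodd
  omega

theorem interlacing_root_count_pos_neg (P Q : Polynomial ℝ)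
    (hPlead : 0 < P.leadingCoeff) (hQlead : 0 < Q.leadingCoeff)
    (hPsimple : ∀ x : ℝ, P.eval x = 0 → (derivative P).eval x ≠ 0)
    (hQsimple : ∀ x : ℝ, Q.eval x = 0 → (derivative Q).eval x ≠ 0)
    (hnocommon : ∀ x : ℝ, ¬(P.eval x = 0 ∧ Q.eval x = 0))
    (hinter1 : ∀ a ∈ realRoots P, ∀ b ∈ realRoots P, a < b →
      ∃ c ∈ realRoots Q, a < c ∧ c < b)
    (hinter2 : ∀ a ∈ realRoots Q, ∀ b ∈ realRoots Q, a < b →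
      ∃ c ∈ realRoots P, a < c ∧ c < b)
    (hPne : (realRoots P).Nonempty) (hQne : (realRoots Q).Nonempty)
    (hmin : sInf (realRoots P) > sInf (realRoots Q))
    (hmax : sSup (realRoots P) < sSup (realRoots Q))
    (hP0 : P.eval 0 > 0) (hQ0 : Q.eval 0 < 0) :
    (realRoots Q ∩ Set.Iio 0).ncard = (realRoots P ∩ Set.Iio 0).ncard ∧
    (realRoots Q ∩ Set.Ioi 0).ncard = (realRoots P ∩ Set.Ioi 0).ncard + 1 :=
  interlacing_root_count_pos_neg_general P Q hPlead hQlead hPsimple hQsimple hinter1 hinter2 hPne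
    hQne hmin hmax hP0 hQ0
end

section
/- Define a sequence of integers by x_0 = 1, x_1 = 1, and x_{n+1}·x_{n-1} = (2n+1)·x_n^2 if n ≡ 0 (mod 3), x_{n+1}·x_{n-1} = 4·x_n^2 if n ≡ 1 (mod 3), and x_{n+1}·x_{n-1} = −(2n+1)·x_n^2 if n ≡ 2 (mod 3). Then for all n, x_n ≠ 0 and the sign of x_n is −1 if n ≡ 3, 5, 6, 7, 8, 10 (mod 12), and +1 if n ≡ 0, 1, 2, 4, 9, 11 (mod 12). -/
/-!
Write `c m` for the coefficient in `x (m + 1) * x (m - 1) = c m * x m ^ 2`; its sign is `-1` exactly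
when `m ≡ 2 (mod 3)`. Since `x (n + 1) ^ 2 > 0`, the recursion gives
`sign x (n + 2) = sign (c (n + 1)) * sign x n`, so by two-step induction the signs of the `x n` follow a
pattern of period `12 = lcm 3 4`, fixed by the two initial values.
-/

theorem pos_mul_of_mul_eq_mul_sq {K : Type*} [Field K] [LinearOrder K] [IsStrictOrderedRing K]
    {a b c y s t : K} (h : b * a = c * y ^ 2) (hy : y ≠ 0) (ha : 0 < s * a) (hc : 0 < t * c) :
    0 < t * s * b := by
  have hs : s ≠ 0 := by rintro rfl; simp at ha
  have hprod : t * s * b * (s * a) = s ^ 2 * (t * c) * y ^ 2 := by linear_combination t * s ^ 2 * h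
  have : 0 < t * s * b * (s * a) := by rw [hprod]; positivity
  exact pos_of_mul_pos_left this ha.le

namespace YablonskiiVorobiev

def coeffSign (m : ℕ) : ℚ := if m % 3 = 2 then -1 else 1

def sign (n : ℕ) : ℚ :=
  if n % 12 = 3 ∨ n % 12 = 5 ∨ n % 12 = 6 ∨ n % 12 = 7 ∨ n % 12 = 8 ∨ n % 12 = 10 then -1 else 1

theorem coeffSign_mul_pos (m : ℕ) :
    0 < coeffSign m * (if m % 3 = 0 then ((2 * m + 1 : ℕ) : ℚ)
      else if m % 3 = 1 then 4 else -((2 * m + 1 : ℕ) : ℚ)) := by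
  unfold coeffSign
  split_ifs <;> first | omega | (norm_num <;> positivity)

theorem sign_add_two (n : ℕ) : sign (n + 2) = coeffSign (n + 1) * sign n := by
  unfold sign coeffSign
  split_ifs <;> first | omega | norm_num

theorem sign_mul_pos (x : ℕ → ℚ) (h0 : x 0 = 1) (h1 : x 1 = 1)
    (hrec : ∀ n : ℕ, x (n + 2) * x n =
      (if (n + 1) % 3 = 0 then ((2 * (n + 1) + 1 : ℕ) : ℚ)
       else if (n + 1) % 3 = 1 then 4
       else -((2 * (n + 1) + 1 : ℕ) : ℚ)) * x (n + 1) ^ 2) (n : ℕ) :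
    0 < sign n * x n := by
  induction n using Nat.twoStepInduction with
  | zero => simp [sign, h0]
  | one => simp [sign, h1]
  | more n hn hn1 =>
    rw [sign_add_two]
    exact pos_mul_of_mul_eq_mul_sq (hrec n) (right_ne_zero_of_mul hn1.ne')
      hn (coeffSign_mul_pos (n + 1))

end YablonskiiVorobiev

open YablonskiiVorobiev in
theorem sign_of_lowest_coefficients (x : ℕ → ℚ)
    (h0 : x 0 = 1) (h1 : x 1 = 1)
    (hrec : ∀ n : ℕ, x (n + 2) * x n =
      (if (n + 1) % 3 = 0 then ((2 * (n + 1) + 1 : ℕ) : ℚ)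
       else if (n + 1) % 3 = 1 then 4
       else -((2 * (n + 1) + 1 : ℕ) : ℚ)) * x (n + 1) ^ 2) :
    ∀ n : ℕ, x n ≠ 0 ∧
      ((n % 12 = 3 ∨ n % 12 = 5 ∨ n % 12 = 6 ∨ n % 12 = 7 ∨ n % 12 = 8 ∨ n % 12 = 10) →
        x n < 0) ∧
      ((n % 12 = 0 ∨ n % 12 = 1 ∨ n % 12 = 2 ∨ n % 12 = 4 ∨ n % 12 = 9 ∨ n % 12 = 11) →
        0 < x n) := by
  intro n
  have hpos := sign_mul_pos x h0 h1 hrec n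
  refine ⟨right_ne_zero_of_mul hpos.ne', fun hminus => ?_, fun hplus => ?_⟩
  · rw [sign, if_pos hminus] at hpos
    linarith
  · rw [sign, if_neg (by omega)] at hpos
    linarith
end

section
/- For every n ∈ ℕ, the number of positive real roots of the n-th Yablonskii–Vorob'ev polynomial Q_n equals ⌊n/6⌋ if n is even, and ⌊(n+3)/6⌋ if n is odd. -/
open Polynomial

/-!
Let `N n` be the number of positive roots of `Q n`. Since the real roots of `Q n` and `Q (n + 2)`
interlace and the largest root belongs to `Q (n + 2)`, counting the roots of one between
consecutive roots of the other on `[0, ∞)` gives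
`N n + [Q n (0) = 0] ≤ N (n + 2) ≤ N n + 1 - [Q (n + 2) (0) = 0]`.
When neither polynomial vanishes at `0`, the sign pattern gives them the same sign there; as the
sign of a monic polynomial at `0` is `(-1) ^ (number of positive roots, with multiplicity)`, the
parities of `N n` and `N (n + 2)` agree. Hence `N (n + 2) = N n + 1` when `n ≡ 1 [MOD 3]` (exactly
when `Q n (0) = 0`) and `N (n + 2) = N n` otherwise, a recursion the closed form also satisfies.
-/

open Set

section LinearOrder

variable {α : Type*} [LinearOrder α]

def Separates (T S : Set α) : Prop :=
  ∀ a ∈ S, ∀ b ∈ S, a < b → ∃ c ∈ T, a < c ∧ c < b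

namespace Separates

variable {S S' T : Set α}

theorem mono (h : Separates T S) (hS' : S' ⊆ S) : Separates T S' :=
  fun a ha b hb hab => h a (hS' ha) b (hS' hb) hab

theorem ncard_le_ncard_inter_Ioo_add_one (h : Separates T S) (hS : S.Finite) (hT : T.Finite)
    {a b : α} (hSab : S ⊆ Icc a b) : S.ncard ≤ (T ∩ Ioo a b).ncard + 1 := by
  classical
  obtain ⟨s, rfl⟩ := hS.exists_finset_coe
  clear hS
  induction s using Finset.induction_on_max generalizing b with
  | empty => simp
  | insert x s hlt ih =>
    rw [Finset.coe_insert] at h hSab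
    rw [Finset.coe_insert, ncard_insert_of_notMem (fun hx => (hlt x hx).false), ncard_coe_finset]
    rcases s.eq_empty_or_nonempty with rfl | hne
    · simp
    have hy := s.max'_mem hne
    have hxb := (hSab (mem_insert x _)).2
    obtain ⟨c, hcT, hyc, hcx⟩ := h _ (mem_insert_of_mem x hy) x (mem_insert x _) (hlt _ hy)
    have hs : (s : Set α) ⊆ Icc a (s.max' hne) :=
      fun z hz => ⟨(hSab (mem_insert_of_mem x hz)).1, s.le_max' z hz⟩
    have hsub : insert c (T ∩ Ioo a (s.max' hne)) ⊆ T ∩ Ioo a b :=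
      insert_subset ⟨hcT, (hs hy).1.trans_lt hyc, hcx.trans_le hxb⟩
        (inter_subset_inter_right _ (Ioo_subset_Ioo_right ((hyc.trans hcx).le.trans hxb)))
    calc s.card + 1 ≤ (T ∩ Ioo a (s.max' hne)).ncard + 1 + 1 := by
          simpa using ih (h.mono (subset_insert x _)) hs
      _ = (insert c (T ∩ Ioo a (s.max' hne))).ncard + 1 := by
          rw [ncard_insert_of_notMem (fun hc => hc.2.2.not_gt hyc) (hT.inter_of_left _)]
      _ ≤ (T ∩ Ioo a b).ncard + 1 := by
          grw [ncard_le_ncard hsub (hT.inter_of_left _)]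

theorem ncard_inter_Ici_le (h : Separates T S) (hS : S.Finite) (hT : T.Finite) (t : α) :
    (S ∩ Ici t).ncard ≤ (T ∩ Ioi t).ncard + 1 := by
  rcases (S ∩ Ici t).eq_empty_or_nonempty with hempty | hne
  · simp [hempty]
  have hfin := hS.inter_of_left (Ici t)
  obtain ⟨b, -, hb⟩ := exists_max_image _ id hfin hne
  calc (S ∩ Ici t).ncard ≤ (T ∩ Ioo t b).ncard + 1 :=
        (h.mono inter_subset_left).ncard_le_ncard_inter_Ioo_add_one hfin hT
          fun x hx => ⟨hx.2, hb x hx⟩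
    _ ≤ (T ∩ Ioi t).ncard + 1 := by
        grw [ncard_le_ncard (inter_subset_inter_right T Ioo_subset_Ioi_self) (hT.inter_of_left _)]

theorem ncard_inter_Ici_le_of_forall_exists_gt (h : Separates T S) (hS : S.Finite)
    (hT : T.Finite) (hdom : ∀ s ∈ S, ∃ m ∈ T, s < m) (t : α) :
    (S ∩ Ici t).ncard ≤ (T ∩ Ioi t).ncard := by
  rcases (S ∩ Ici t).eq_empty_or_nonempty with hempty | hne
  · simp [hempty]
  have hfin := hS.inter_of_left (Ici t)
  obtain ⟨b, ⟨hbS, hbt⟩, hb⟩ := exists_max_image _ id hfin hne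
  obtain ⟨m, hmT, hbm⟩ := hdom b hbS
  calc (S ∩ Ici t).ncard ≤ (T ∩ Ioo t b).ncard + 1 :=
        (h.mono inter_subset_left).ncard_le_ncard_inter_Ioo_add_one hfin hT
          fun x hx => ⟨hx.2, hb x hx⟩
    _ = (insert m (T ∩ Ioo t b)).ncard :=
        (ncard_insert_of_notMem (fun hm => hm.2.2.not_gt hbm) (hT.inter_of_left _)).symm
    _ ≤ (T ∩ Ioi t).ncard :=
        ncard_le_ncard (insert_subset ⟨hmT, hbt.trans_lt hbm⟩
          (inter_subset_inter_right T Ioo_subset_Ioi_self)) (hT.inter_of_left _)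

end Separates

theorem Set.ncard_inter_Ioi_le_ncard_inter_Ici {S : Set α} (hS : S.Finite) (t : α) :
    (S ∩ Ioi t).ncard ≤ (S ∩ Ici t).ncard :=
  ncard_le_ncard (inter_subset_inter_right S Ioi_subset_Ici_self) (hS.inter_of_left _)

theorem Set.ncard_inter_Ici_of_mem {S : Set α} (hS : S.Finite) {t : α} (ht : t ∈ S) :
    (S ∩ Ici t).ncard = (S ∩ Ioi t).ncard + 1 := by
  rw [← Ioi_insert, inter_insert_of_mem ht,
    ncard_insert_of_notMem (by simp) (hS.inter_of_left _)]

end LinearOrder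

theorem exists_mem_gt_of_csInf_lt_of_csSup_lt {S T : Set ℝ} (hS : S.Finite) (hT : T.Finite)
    (hinf : sInf T < sInf S) (hsup : sSup S < sSup T) : ∀ s ∈ S, ∃ m ∈ T, s < m := by
  intro s hs
  -- `sInf ∅ = sSup ∅ = 0` in `ℝ`, so `T = ∅` would force `0 < sInf S ≤ sSup S < 0`.
  have hTne : T.Nonempty := by
    by_contra! hT
    subst hT
    rw [Real.sInf_empty] at hinf
    rw [Real.sSup_empty] at hsup
    linarith [csInf_le_csSup ⟨s, hs⟩ hS.bddBelow hS.bddAbove]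
  exact ⟨sSup T, hTne.csSup_mem hT, (le_csSup hS.bddAbove hs).trans_lt hsup⟩

namespace Polynomial

variable {P : ℝ[X]} {a : ℝ}

theorem Monic.eval_pos_of_forall_le_not_isRoot (hP : P.Monic)
    (h : ∀ x, a ≤ x → ¬ P.IsRoot x) :
    0 < P.eval a := by
  by_contra! hle
  have hdeg : 0 < P.degree := by
    by_contra! hdeg
    rw [hP.degree_le_zero_iff_eq_one.mp hdeg, eval_one] at hle
    norm_num at hle
  obtain ⟨M, hM, haM⟩ := ((tendsto_atTop_of_leadingCoeff_nonneg P hdeg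
    (by simp [hP.leadingCoeff])).eventually_gt_atTop 0 |>.and (Filter.eventually_ge_atTop a)).exists
  obtain ⟨x, hx, hPx⟩ := intermediate_value_Icc haM P.continuous.continuousOn ⟨hle, hM.le⟩
  exact h x hx.1 hPx

theorem Monic.eval_pos_iff_even_countP_roots (hP : P.Monic) (ha : P.eval a ≠ 0) :
    0 < P.eval a ↔ Even (P.roots.countP (a < ·)) := by
  classical
  set s := P.roots.filter (a < ·)
  obtain ⟨R, hPR⟩ : (s.map (X - C ·)).prod ∣ P :=
    (Multiset.prod_dvd_prod_of_le (Multiset.map_le_map (Multiset.filter_le _ _))).trans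
      (prod_multiset_X_sub_C_dvd P)
  have hR : R.Monic :=
    (monic_multiset_prod_of_monic _ _ fun r _ => monic_X_sub_C r).of_mul_monic_left (hPR ▸ hP)
  have hroots : P.roots = s + R.roots := by
    rw [hPR, roots_mul (hPR ▸ hP.ne_zero), roots_multiset_prod_X_sub_C]
  -- every root of `P` above `a` has been divided out, with its multiplicity
  have hRa : 0 < R.eval a := by
    refine hR.eval_pos_of_forall_le_not_isRoot fun x hx hRx => ?_
    rcases hx.lt_or_eq with hx | rfl
    · have hcount := congrArg (Multiset.count x) hroots
      rw [Multiset.count_add, Multiset.count_filter_of_pos hx] at hcount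
      have := Multiset.count_pos.mpr ((mem_roots hR.ne_zero).mpr hRx)
      omega
    · exact ha (by rw [hPR, eval_mul, hRx.eq_zero, mul_zero])
  have hsa : 0 < (s.map (· - a)).prod :=
    Multiset.prod_pos <| Multiset.forall_mem_map_iff.mpr fun r hr =>
      sub_pos.mpr (Multiset.mem_filter.mp hr).2
  have hFa : (s.map (X - C ·)).prod.eval a = (-1) ^ s.card * (s.map (· - a)).prod := by
    rw [eval_multiset_prod, Multiset.map_map, ← Multiset.card_map (· - a) s,
      ← Multiset.prod_map_neg, Multiset.map_map]
    congr 2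
    ext r
    simp
  have hPa : P.eval a = (-1) ^ s.card * ((s.map (· - a)).prod * R.eval a) := by
    rw [hPR, eval_mul, hFa, mul_assoc]
  rw [Multiset.countP_eq_card_filter, hPa]
  change _ ↔ Even s.card
  rcases Nat.even_or_odd s.card with he | ho
  · simpa [he.neg_one_pow, he] using mul_pos hsa hRa
  · simpa [ho.neg_one_pow, Nat.not_even_iff_odd.mpr ho] using (mul_pos hsa hRa).le

theorem ncard_realRoots_inter_Ioi_eq_countP_roots (hP : P ≠ 0)
    (hsimple : ∀ x, a < x → P.eval x = 0 → P.derivative.eval x ≠ 0) :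
    (realRoots P ∩ Ioi a).ncard = P.roots.countP (a < ·) := by
  classical
  have hnodup : (P.roots.filter (a < ·)).Nodup := by
    refine Multiset.nodup_iff_count_le_one.mpr fun x => ?_
    rw [Multiset.count_filter]
    split_ifs with hx
    · rw [count_roots]
      by_contra! h
      exact hsimple x hx ((one_lt_rootMultiplicity_iff_isRoot hP).mp h).1
        ((one_lt_rootMultiplicity_iff_isRoot hP).mp h).2
    · exact zero_le_one
  have hset : realRoots P ∩ Ioi a = ↑(P.roots.filter (a < ·)).toFinset := by
    ext x
    simp [realRoots, mem_roots hP, and_comm]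
  rw [hset, ncard_coe_finset, Multiset.toFinset_card_of_nodup hnodup,
    Multiset.countP_eq_card_filter]

end Polynomial

theorem ncard_realRoots_inter_Ioi_eq_of_interlace {P P' : ℝ[X]} {t : ℝ} (hP : P.Monic)
    (hP' : P'.Monic) (hsimple : ∀ x, t < x → P.eval x = 0 → P.derivative.eval x ≠ 0)
    (hsimple' : ∀ x, t < x → P'.eval x = 0 → P'.derivative.eval x ≠ 0)
    (hsep : Separates (realRoots P') (realRoots P))
    (hsep' : Separates (realRoots P) (realRoots P'))
    (hdom : ∀ s ∈ realRoots P, ∃ m ∈ realRoots P', s < m)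
    (hsign : 0 ≤ P.eval t * P'.eval t) :
    (realRoots P' ∩ Ioi t).ncard =
      (realRoots P ∩ Ioi t).ncard + if P.eval t = 0 then 1 else 0 := by
  have hS : (realRoots P).Finite := finite_setOfPred_isRoot hP.ne_zero
  have hT : (realRoots P').Finite := finite_setOfPred_isRoot hP'.ne_zero
  have hlow := hsep.ncard_inter_Ici_le_of_forall_exists_gt hS hT hdom t
  have hup := hsep'.ncard_inter_Ici_le hT hS t
  have hS_le := ncard_inter_Ioi_le_ncard_inter_Ici hS t
  have hT_le := ncard_inter_Ioi_le_ncard_inter_Ici hT t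
  split_ifs with h0
  · have := ncard_inter_Ici_of_mem hS h0
    omega
  rcases hsign.eq_or_lt with hzero | hpos
  · have := ncard_inter_Ici_of_mem hT ((mul_eq_zero.mp hzero.symm).resolve_left h0)
    omega
  have hpar : Even (realRoots P ∩ Ioi t).ncard ↔ Even (realRoots P' ∩ Ioi t).ncard := by
    rw [ncard_realRoots_inter_Ioi_eq_countP_roots hP.ne_zero hsimple,
      ncard_realRoots_inter_Ioi_eq_countP_roots hP'.ne_zero hsimple',
      ← hP.eval_pos_iff_even_countP_roots h0,
      ← hP'.eval_pos_iff_even_countP_roots (right_ne_zero_of_mul hpos.ne')]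
    exact pos_iff_pos_of_mul_pos hpos
  simp only [Nat.even_iff] at hpar
  omega

theorem number_of_positive_real_roots_general (Q : ℕ → Polynomial ℝ)
    (hQ0 : Q 0 = 1) (hQ1 : Q 1 = X)
    (hmonic : ∀ n, (Q n).Monic ∧ (Q n).natDegree = n * (n + 1) / 2)
    (hsimple : ∀ n, ∀ x : ℝ, (Q n).eval x = 0 → (derivative (Q n)).eval x ≠ 0)
    (hinter1 : ∀ n, ∀ a ∈ realRoots (Q n), ∀ b ∈ realRoots (Q n), a < b →
      ∃ c ∈ realRoots (Q (n + 2)), a < c ∧ c < b)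
    (hinter2 : ∀ n, ∀ a ∈ realRoots (Q (n + 2)), ∀ b ∈ realRoots (Q (n + 2)), a < b →
      ∃ c ∈ realRoots (Q n), a < c ∧ c < b)
    (hminmax : ∀ n : ℕ, 2 ≤ n →
      sInf (realRoots (Q (n - 1))) > sInf (realRoots (Q (n + 1))) ∧
      sSup (realRoots (Q (n - 1))) < sSup (realRoots (Q (n + 1))))
    (hsign : ∀ n : ℕ,
      ((n % 12 = 3 ∨ n % 12 = 5 ∨ n % 12 = 6 ∨ n % 12 = 8) → (Q n).eval 0 < 0) ∧
      ((n % 12 = 1 ∨ n % 12 = 4 ∨ n % 12 = 7 ∨ n % 12 = 10) → (Q n).eval 0 = 0) ∧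
      ((n % 12 = 0 ∨ n % 12 = 2 ∨ n % 12 = 9 ∨ n % 12 = 11) → 0 < (Q n).eval 0))
    : ∀ n : ℕ, (realRoots (Q n) ∩ Set.Ioi 0).ncard =
        if n % 2 = 0 then n / 6 else (n + 3) / 6 := by
  have hfin (n : ℕ) : (realRoots (Q n)).Finite := finite_setOfPred_isRoot (hmonic n).1.ne_zero
  have hdom : ∀ n, ∀ s ∈ realRoots (Q n), ∃ m ∈ realRoots (Q (n + 2)), s < m
    | 0 => by simp [realRoots, hQ0]
    | n + 1 => exists_mem_gt_of_csInf_lt_of_csSup_lt (hfin _) (hfin _)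
        (hminmax (n + 2) le_add_self).1 (hminmax (n + 2) le_add_self).2
  have heval_zero (n : ℕ) :
      ((Q n).eval 0 = 0 ↔ n % 3 = 1) ∧ 0 ≤ (Q n).eval 0 * (Q (n + 2)).eval 0 := by
    obtain ⟨hn₁, hn₂, hn₃⟩ := hsign n
    obtain ⟨hm₁, hm₂, hm₃⟩ := hsign (n + 2)
    rw [show (n + 2) % 12 = (n % 12 + 2) % 12 by omega] at hm₁ hm₂ hm₃
    rw [show n % 3 = n % 12 % 3 by omega]
    have : n % 12 < 12 := Nat.mod_lt n (by norm_num)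
    interval_cases n % 12 <;> simp_all <;> and_intros <;> nlinarith
  have hstep (n : ℕ) : (realRoots (Q (n + 2)) ∩ Ioi 0).ncard =
      (realRoots (Q n) ∩ Ioi 0).ncard + if n % 3 = 1 then 1 else 0 := by
    rw [ncard_realRoots_inter_Ioi_eq_of_interlace (hmonic n).1 (hmonic (n + 2)).1
      (fun x _ => hsimple n x) (fun x _ => hsimple (n + 2) x) (hinter1 n) (hinter2 n) (hdom n)
      (heval_zero n).2]
    simp only [(heval_zero n).1]
  intro n
  induction n using Nat.twoStepInduction with
  | zero => simp [realRoots, hQ0]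
  | one => simp [realRoots, hQ1]
  | more n ih _ =>
    rw [hstep, ih]
    split_ifs <;> omega

theorem number_of_positive_real_roots (Q : ℕ → Polynomial ℝ)
    (hQ0 : Q 0 = 1) (hQ1 : Q 1 = X)
    (hrec : ∀ n, Q (n + 2) * Q n =
      X * (Q (n + 1)) ^ 2 -
        4 * (Q (n + 1) * derivative (derivative (Q (n + 1))) - (derivative (Q (n + 1))) ^ 2))
    (hmonic : ∀ n, (Q n).Monic ∧ (Q n).natDegree = n * (n + 1) / 2)
    (hsimple : ∀ n, ∀ x : ℝ, (Q n).eval x = 0 → (derivative (Q n)).eval x ≠ 0)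
    (hnocommon1 : ∀ n, ∀ x : ℝ, ¬((Q n).eval x = 0 ∧ (Q (n + 1)).eval x = 0))
    (hnocommon2 : ∀ n, ∀ x : ℝ, ¬((Q n).eval x = 0 ∧ (Q (n + 2)).eval x = 0))
    (hinter1 : ∀ n, ∀ a ∈ realRoots (Q n), ∀ b ∈ realRoots (Q n), a < b →
      ∃ c ∈ realRoots (Q (n + 2)), a < c ∧ c < b)
    (hinter2 : ∀ n, ∀ a ∈ realRoots (Q (n + 2)), ∀ b ∈ realRoots (Q (n + 2)), a < b →
      ∃ c ∈ realRoots (Q n), a < c ∧ c < b)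
    (hminmax : ∀ n : ℕ, 2 ≤ n →
      sInf (realRoots (Q (n - 1))) > sInf (realRoots (Q (n + 1))) ∧
      sSup (realRoots (Q (n - 1))) < sSup (realRoots (Q (n + 1))))
    (hsign : ∀ n : ℕ,
      ((n % 12 = 3 ∨ n % 12 = 5 ∨ n % 12 = 6 ∨ n % 12 = 8) → (Q n).eval 0 < 0) ∧
      ((n % 12 = 1 ∨ n % 12 = 4 ∨ n % 12 = 7 ∨ n % 12 = 10) → (Q n).eval 0 = 0) ∧
      ((n % 12 = 0 ∨ n % 12 = 2 ∨ n % 12 = 9 ∨ n % 12 = 11) → 0 < (Q n).eval 0))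
    : ∀ n : ℕ, (realRoots (Q n) ∩ Set.Ioi 0).ncard =
        if n % 2 = 0 then n / 6 else (n + 3) / 6 :=
  number_of_positive_real_roots_general Q hQ0 hQ1 hmonic hsimple hinter1 hinter2 hminmax hsign
end
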